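/- Let κ be a regular cardinal and μ a (κ,κ⁺)-cardinal. If X, Y ∈ μ have the same rank (in the well-founded order of μ under inclusion) and α ∈ X ∩ Y, then X ∩ α = Y ∩ α. -/

import Mathlib

open Set Cardinal Ordinal

noncomputable section

/-- Lower a (small) ordinal of `Ordinal.{1}` to `Ordinal.{0}` (the inverse of `Ordinal.lift`
on its range). -/
noncomputable def olower (o : Ordinal.{1}) : Ordinal.{0} :=
  sInf {a : Ordinal.{0} | Ordinal.lift.{1} a = o}

/-- The order type of a set of ordinals. -/
noncomputable def otp (A : Set Ordinal.{0}) : Ordinal.{0} :=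
  olower (@Ordinal.type _ (Subrel ((· < ·) : Ordinal → Ordinal → Prop) A)
    (inferInstanceAs (IsWellOrder _ (Subrel ((· < ·) : Ordinal → Ordinal → Prop) (· ∈ A)))))

/-- The canonical order-preserving transfer map from a set of ordinals `X` to a set of
ordinals `Y` of the same order type: an element `a ∈ X` is sent to the unique element of `Y`
occupying the same position. -/
noncomputable def omap (X Y : Set Ordinal) (a : Ordinal) : Ordinal :=
  sInf {b | b ∈ Y ∧ otp (Y ∩ Set.Iio b) = otp (X ∩ Set.Iio a)}

/-- `IsStar X₁ X₂ X` says `X = X₁ * X₂`: `X₁` and `X₂` have the same order type,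
`X = X₁ ∪ X₂`, and `X₁ ∩ X₂ < X₁ \ X₂ < X₂ \ X₁` elementwise. -/
def IsStar (X₁ X₂ X : Set Ordinal) : Prop :=
  otp X₁ = otp X₂ ∧ X = X₁ ∪ X₂ ∧
  (∀ a ∈ X₁ ∩ X₂, ∀ b ∈ X₁ \ X₂, a < b) ∧
  (∀ b ∈ X₁ \ X₂, ∀ c ∈ X₂ \ X₁, b < c)

set_option linter.deprecated false in
/-- A `(κ,κ⁺)`-cardinal (a neat simplified `(κ,1)`-morass presented as a family of sets):
a family `μ ⊆ ℘_κ(κ⁺)` which is well-founded under strict inclusion, locally small,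
homogeneous, directed, locally almost directed, covers `κ⁺` and is neat. -/
structure TwoCardinal (κ : Cardinal.{0}) where
  mu : Set (Set Ordinal)
  mem_sub : ∀ X ∈ mu, X ⊆ Set.Iio (Order.succ κ).ord
  mem_small : ∀ X ∈ mu, (otp X).card < κ
  wf : WellFounded fun X Y : mu => (X : Set Ordinal) ⊂ (Y : Set Ordinal)
  locSmall : ∀ X : mu,
    #{Z : mu // (Z : Set Ordinal) ⊂ (X : Set Ordinal)} < Cardinal.lift.{1} κ
  homog : ∀ X Y : mu, (wf.apply X).rank = (wf.apply Y).rank →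
    otp (X : Set Ordinal) = otp (Y : Set Ordinal) ∧
    {Z | Z ∈ mu ∧ Z ⊂ (Y : Set Ordinal)} =
      (fun Z => omap (X : Set Ordinal) (Y : Set Ordinal) '' Z) ''
        {Z | Z ∈ mu ∧ Z ⊂ (X : Set Ordinal)}
  directed : ∀ X ∈ mu, ∀ Y ∈ mu, ∃ Z ∈ mu, X ⊆ Z ∧ Y ⊆ Z
  locAlmostDirected : ∀ X : mu,
    (∀ Z₁ ∈ mu, ∀ Z₂ ∈ mu, Z₁ ⊂ (X : Set Ordinal) → Z₂ ⊂ (X : Set Ordinal) →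
      ∃ Z ∈ mu, Z ⊂ (X : Set Ordinal) ∧ Z₁ ⊆ Z ∧ Z₂ ⊆ Z) ∨
    (∃ X₁ X₂ : mu, (wf.apply X₁).rank = (wf.apply X₂).rank ∧
      IsStar (X₁ : Set Ordinal) (X₂ : Set Ordinal) (X : Set Ordinal) ∧
      {Z | Z ∈ mu ∧ Z ⊂ (X : Set Ordinal)} =
        {Z | Z ∈ mu ∧ Z ⊂ (X₁ : Set Ordinal)} ∪ {Z | Z ∈ mu ∧ Z ⊂ (X₂ : Set Ordinal)} ∪
          {(X₁ : Set Ordinal), (X₂ : Set Ordinal)})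
  covers : ⋃₀ mu = Set.Iio (Order.succ κ).ord
  neat : ∀ X : mu, (wf.apply X).rank ≠ 0 →
    (X : Set Ordinal) = ⋃₀ {Z | Z ∈ mu ∧ Z ⊂ (X : Set Ordinal)}

namespace TwoCardinal

variable {κ : Cardinal} (M : TwoCardinal κ)

set_option linter.deprecated false in
/-- The rank of an element of `μ` in the well-founded order `(μ, ⊂)`. -/
noncomputable def rank (X : M.mu) : Ordinal := olower ((M.wf.apply X).rank)

/-- The height of the well-founded order `(μ, ⊂)`. -/
noncomputable def ht : Ordinal := sSup (Set.range fun X : M.mu => M.rank X + 1)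

/-- The term `μ_ξ(α)` of the μ-sequence at `α`: equal to `X ∩ α` for any `X ∈ μ` of
rank `ξ` containing `α` (this is independent of the choice of `X`). -/
noncomputable def seq (α ξ : Ordinal) : Set Ordinal :=
  ⋃₀ {S | ∃ X : M.mu, M.rank X = ξ ∧ α ∈ (X : Set Ordinal) ∧
    S = (X : Set Ordinal) ∩ Set.Iio α}

/-- The μ-coloring `m(α,β) = min{rank X : α, β ∈ X ∈ μ}`. -/
noncomputable def mcol (a b : Ordinal) : Ordinal :=
  sInf {ξ | ∃ X : M.mu, M.rank X = ξ ∧ a ∈ (X : Set Ordinal) ∧ b ∈ (X : Set Ordinal)}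

end TwoCardinal

/-!
Induct on a common upper bound `Z ∈ μ` of `X` and `Y`, given by directedness. If `μ|Z` is
directed, `X` and `Y` lie in a common smaller element. Otherwise `Z = X₁ * X₂`, and the only new
case is `X ⊆ X₁`, `Y ⊆ X₂`. Then `X₁ ∩ α = X₂ ∩ α`, so the order isomorphism `f : X₁ → X₂`
fixes `X₁ ∩ (α + 1)`. By homogeneity `Y = f[Y₀]` for some `Y₀ ∈ μ|X₁`, which has the rank of `Y`
(`Z ↦ f[Z]` is an isomorphism `μ|X₁ ≅ μ|X₂`) and agrees with `Y` up to `α` inclusive; the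
induction hypothesis for `X₁` applied to `X` and `Y₀` finishes.
-/

universe u

theorem WellFounded.rank_eq_of_bisim {α β : Type u} {r : α → α → Prop} {s : β → β → Prop}
    (hr : WellFounded r) (hs : WellFounded s) (R : α → β → Prop)
    (forth : ∀ a b, R a b → ∀ a', r a' a → ∃ b', s b' b ∧ R a' b')
    (back : ∀ a b, R a b → ∀ b', s b' b → ∃ a', r a' a ∧ R a' b') {a : α} {b : β}
    (hab : R a b) : (hr.apply a).rank = (hs.apply b).rank := by
  induction a using hr.induction generalizing b with
  | _ a IH =>
    rw [Acc.rank_eq, Acc.rank_eq]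
    apply le_antisymm
    · refine Ordinal.iSup_le fun ⟨a', ha'⟩ => ?_
      obtain ⟨b', hb', hR⟩ := forth a b hab a' ha'
      rw [IH a' ha' hR]
      exact Ordinal.le_iSup (fun c : {c // s c b} => Order.succ (hs.apply c.1).rank) ⟨b', hb'⟩
    · refine Ordinal.iSup_le fun ⟨b', hb'⟩ => ?_
      obtain ⟨a', ha', hR⟩ := back a b hab b' hb'
      rw [← IH a' ha' hR]
      exact Ordinal.le_iSup (fun c : {c // r c a} => Order.succ (hr.apply c.1).rank) ⟨a', ha'⟩

theorem WellFounded.rank_mem_range_lift {α : Type (u + 1)} [Small.{u} α] {r : α → α → Prop}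
    (hr : WellFounded r) (a : α) : (hr.apply a).rank ∈ Set.range Ordinal.lift.{u + 1, u} := by
  induction a using hr.induction with
  | _ a IH =>
    choose g hg using fun b : {b // r b a} => IH b.1 b.2
    refine Ordinal.mem_range_lift_of_le (a := ⨆ b, Order.succ (g b)) ?_
    rw [Acc.rank_eq]
    refine Ordinal.iSup_le fun b => ?_
    rw [← hg b, ← Ordinal.lift_succ, Ordinal.lift_le]
    exact Ordinal.le_iSup (fun b => Order.succ (g b)) b

theorem lift_olower {o : Ordinal.{1}} (h : o ∈ Set.range Ordinal.lift.{1, 0}) :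
    Ordinal.lift (olower o) = o :=
  csInf_mem (s := {a | Ordinal.lift a = o}) h

theorem type_mem_range_lift {α : Type 1} [Small.{0} α] (r : α → α → Prop) [IsWellOrder α r] :
    Ordinal.type r ∈ Set.range Ordinal.lift.{1, 0} :=
  ⟨Ordinal.type ((equivShrink α).symm ⁻¹'o r), by
    simp only [Ordinal.type_lift_preimage, Ordinal.lift_uzero]⟩

section OrderType

variable {A B : Set Ordinal.{0}} [Small.{0} B]

theorem lift_otp (A : Set Ordinal.{0}) [Small.{0} A] :
    Ordinal.lift (otp A) = Ordinal.type (Subrel ((· < ·) : Ordinal → Ordinal → Prop) (· ∈ A)) :=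
  lift_olower (type_mem_range_lift (α := A) (Subrel (· < ·) (· ∈ A)))

theorem lift_otp_inter_Iio {b : Ordinal} (hb : b ∈ B) :
    Ordinal.lift (otp (B ∩ Iio b)) =
      Ordinal.typein (Subrel ((· < ·) : Ordinal → Ordinal → Prop) (· ∈ B)) ⟨b, hb⟩ := by
  have : Small.{0} (B ∩ Iio b : Set Ordinal) := small_subset inter_subset_left
  rw [lift_otp, ← Ordinal.type_subrel]
  exact Ordinal.type_eq.2 ⟨{
    toFun := fun x => ⟨⟨x, x.2.1⟩, x.2.2⟩
    invFun := fun x => ⟨x.1, x.1.2, x.2⟩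
    left_inv := fun _ => rfl
    right_inv := fun _ => rfl
    map_rel_iff' := Iff.rfl }⟩

theorem otp_inter_Iio_lt_otp_inter_Iio_iff {b c : Ordinal} (hb : b ∈ B) (hc : c ∈ B) :
    otp (B ∩ Iio b) < otp (B ∩ Iio c) ↔ b < c := by
  rw [← Ordinal.lift_lt, lift_otp_inter_Iio hb, lift_otp_inter_Iio hc, Ordinal.typein_lt_typein]
  rfl

theorem otp_inter_Iio_lt {b : Ordinal} (hb : b ∈ B) : otp (B ∩ Iio b) < otp B := by
  rw [← Ordinal.lift_lt, lift_otp_inter_Iio hb, lift_otp]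
  exact Ordinal.typein_lt_type _ _

theorem exists_otp_inter_Iio_eq {ξ : Ordinal} (h : ξ < otp B) :
    ∃ b ∈ B, otp (B ∩ Iio b) = ξ := by
  rw [← Ordinal.lift_lt, lift_otp] at h
  obtain ⟨⟨b, hb⟩, hξ⟩ := Ordinal.typein_surj _ h
  exact ⟨b, hb, Ordinal.lift_inj.1 (by rw [lift_otp_inter_Iio hb, hξ])⟩

theorem omap_mem_and_otp [Small.{0} A] (h : otp A = otp B) {a : Ordinal} (ha : a ∈ A) :
    omap A B a ∈ B ∧ otp (B ∩ Iio (omap A B a)) = otp (A ∩ Iio a) :=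
  csInf_mem (exists_otp_inter_Iio_eq (h ▸ otp_inter_Iio_lt ha))

theorem strictMonoOn_omap [Small.{0} A] (h : otp A = otp B) : StrictMonoOn (omap A B) A := by
  intro a₁ ha₁ a₂ ha₂ hlt
  obtain ⟨hb₁, he₁⟩ := omap_mem_and_otp h ha₁
  obtain ⟨hb₂, he₂⟩ := omap_mem_and_otp h ha₂
  rw [← otp_inter_Iio_lt_otp_inter_Iio_iff hb₁ hb₂, he₁, he₂]
  exact (otp_inter_Iio_lt_otp_inter_Iio_iff ha₁ ha₂).2 hlt

theorem omap_eq_self {β : Ordinal} (hB : β ∈ B)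
    (hseg : A ∩ Iio β = B ∩ Iio β) : omap A B β = β := by
  have hset : {b | b ∈ B ∧ otp (B ∩ Iio b) = otp (A ∩ Iio β)} = {β} := by
    ext b
    simp only [mem_ofPred_eq, mem_singleton_iff, hseg]
    constructor
    · rintro ⟨hb, he⟩
      rcases lt_trichotomy b β with hlt | rfl | hgt
      · exact absurd he ((otp_inter_Iio_lt_otp_inter_Iio_iff hb hB).2 hlt).ne
      · rfl
      · exact absurd he ((otp_inter_Iio_lt_otp_inter_Iio_iff hB hb).2 hgt).ne'
    · rintro rfl
      exact ⟨hB, rfl⟩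
  rw [omap, hset, csInf_singleton]

theorem omap_eq_self_of_le {α : Ordinal} (hB : α ∈ B)
    (hseg : A ∩ Iio α = B ∩ Iio α) {β : Ordinal} (hβ : β ∈ A) (hβα : β ≤ α) :
    omap A B β = β := by
  rcases hβα.lt_or_eq with hlt | rfl
  · have hsegβ : A ∩ Iio β = B ∩ Iio β := by
      simpa only [inter_assoc, Iio_inter_Iio, min_eq_right hlt.le] using
        congrArg (· ∩ Iio β) hseg
    exact omap_eq_self ((hseg ▸ ⟨hβ, hlt⟩ : β ∈ B ∩ Iio α).1) hsegβ
  · exact omap_eq_self hB hseg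

end OrderType

theorem StrictMonoOn.image_inter_Iic_eq {α : Type*} [LinearOrder α] {f : α → α} {s t : Set α}
    {a : α} (hf : StrictMonoOn f s) (ha : a ∈ s) (hfix : ∀ b ∈ s, b ≤ a → f b = b)
    (ht : t ⊆ s) : f '' t ∩ Iic a = t ∩ Iic a := by
  ext y
  constructor
  · rintro ⟨⟨x, hx, rfl⟩, hxa⟩
    have hxa' : x ≤ a := not_lt.1 fun hax => by
      have := (hf ha (ht hx) hax).trans_le hxa
      rw [hfix a ha le_rfl] at this
      exact lt_irrefl a this
    rw [hfix x (ht hx) hxa']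
    exact ⟨hx, hxa'⟩
  · rintro ⟨hy, hya⟩
    exact ⟨⟨y, hy, hfix y (ht hy) hya⟩, hya⟩

namespace TwoCardinal

variable {κ : Cardinal} (M : TwoCardinal κ)

instance : Small.{0} M.mu :=
  small_subset (s := 𝒫 Iio (Order.succ κ).ord) M.mem_sub

theorem small_coe (X : M.mu) : Small.{0} (X : Set Ordinal) :=
  small_subset (M.mem_sub X X.2)

theorem lift_rank (X : M.mu) : Ordinal.lift (M.rank X) = (M.wf.apply X).rank :=
  lift_olower (M.wf.rank_mem_range_lift X)

variable {M}

theorem rank_eq_rank_iff {X Y : M.mu} :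
    M.rank X = M.rank Y ↔ (M.wf.apply X).rank = (M.wf.apply Y).rank := by
  rw [← lift_rank, ← lift_rank, Ordinal.lift_inj]

theorem rank_lt_rank {X Y : M.mu} (h : (X : Set Ordinal) ⊂ Y) : M.rank X < M.rank Y := by
  rw [← Ordinal.lift_lt, lift_rank, lift_rank]
  exact Acc.rank_lt_of_rel (M.wf.apply Y) h

theorem eq_of_subset_of_rank_eq {X Y : M.mu} (h : (X : Set Ordinal) ⊆ Y)
    (hr : M.rank X = M.rank Y) : (X : Set Ordinal) = Y := by
  by_contra hne
  exact (rank_lt_rank (h.ssubset_of_ne hne)).ne hr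

theorem rank_eq_rank_of_eq_omap_image {X₁ X₂ : M.mu} (hr : M.rank X₁ = M.rank X₂) {Z W : M.mu}
    (hZ : (Z : Set Ordinal) ⊂ X₁) (hW : (W : Set Ordinal) = omap X₁ X₂ '' Z) :
    M.rank Z = M.rank W := by
  obtain ⟨hotp, himg⟩ := M.homog X₁ X₂ (rank_eq_rank_iff.1 hr)
  have := M.small_coe X₁
  have := M.small_coe X₂
  have hinj := (strictMonoOn_omap hotp).injOn
  rw [rank_eq_rank_iff]
  refine M.wf.rank_eq_of_bisim M.wf
    (fun U V : M.mu => (U : Set Ordinal) ⊂ X₁ ∧ (V : Set Ordinal) = omap X₁ X₂ '' U)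
    ?_ ?_ ⟨hZ, hW⟩
  · rintro U V ⟨hU, hV⟩ U' (hU' : (U' : Set Ordinal) ⊂ U)
    have hU'X : (U' : Set Ordinal) ⊂ X₁ := hU'.trans hU
    have hmem : omap X₁ X₂ '' U' ∈ {Z | Z ∈ M.mu ∧ Z ⊂ X₂} := himg ▸ ⟨U', ⟨U'.2, hU'X⟩, rfl⟩
    refine ⟨⟨_, hmem.1⟩, ?_, hU'X, rfl⟩
    show omap X₁ X₂ '' U' ⊂ V
    rw [hV]
    exact (hinj.image_ssubset_image_iff hU'X.subset hU.subset).2 hU'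
  · rintro U V ⟨hU, hV⟩ V' (hV' : (V' : Set Ordinal) ⊂ V)
    have hVmem : (V : Set Ordinal) ∈ {Z | Z ∈ M.mu ∧ Z ⊂ X₂} :=
      himg ▸ ⟨(U : Set Ordinal), ⟨U.2, hU⟩, hV.symm⟩
    obtain ⟨U', ⟨hU'mu, hU'X⟩, hU'V'⟩ :
        (V' : Set Ordinal) ∈ (fun Z => omap X₁ X₂ '' Z) '' {Z | Z ∈ M.mu ∧ Z ⊂ X₁} :=
      himg ▸ ⟨V'.2, hV'.trans hVmem.2⟩
    refine ⟨⟨U', hU'mu⟩, ?_, hU'X, hU'V'.symm⟩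
    refine (hinj.image_ssubset_image_iff hU'X.subset hU.subset).1 ?_
    rw [← hV, show omap X₁ X₂ '' U' = V' from hU'V']
    exact hV'

variable (M) in
def CoherentBelow (Z : M.mu) : Prop :=
  ∀ X Y : M.mu, (X : Set Ordinal) ⊆ Z → (Y : Set Ordinal) ⊆ Z → M.rank X = M.rank Y →
    ∀ α ∈ (X : Set Ordinal), α ∈ (Y : Set Ordinal) →
      (X : Set Ordinal) ∩ Iio α = (Y : Set Ordinal) ∩ Iio α

/- If `X₁ ⊆ X₂` they are equal by rank; otherwise a point of `X₁ \ X₂` separates the common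
part `X₁ ∩ X₂` from `X₂ \ X₁`. -/
theorem inter_Iio_eq_of_isStar {X₁ X₂ : M.mu} {Z : Set Ordinal} (hr : M.rank X₁ = M.rank X₂)
    (hstar : IsStar X₁ X₂ Z) {β : Ordinal} (h₁ : β ∈ (X₁ : Set Ordinal))
    (h₂ : β ∈ (X₂ : Set Ordinal)) :
    (X₁ : Set Ordinal) ∩ Iio β = (X₂ : Set Ordinal) ∩ Iio β := by
  obtain ⟨-, -, hlow, hmid⟩ := hstar
  rcases ((X₁ : Set Ordinal) \ X₂).eq_empty_or_nonempty with hd | ⟨b, hb⟩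
  · rw [eq_of_subset_of_rank_eq (sdiff_eq_empty.1 hd) hr]
  ext x
  constructor
  · rintro ⟨hx, hxβ⟩
    exact ⟨by_contra fun hx₂ => lt_asymm hxβ (hlow β ⟨h₁, h₂⟩ x ⟨hx, hx₂⟩), hxβ⟩
  · rintro ⟨hx, hxβ⟩
    exact ⟨by_contra fun hx₁ =>
      lt_asymm hxβ ((hlow β ⟨h₁, h₂⟩ b hb).trans (hmid b hb x ⟨hx, hx₁⟩)), hxβ⟩

theorem inter_Iio_eq_of_subset_of_subset {X₁ X₂ A B : M.mu} (hr : M.rank X₁ = M.rank X₂)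
    (hcoh : M.CoherentBelow X₁) {α : Ordinal}
    (hseg : (X₁ : Set Ordinal) ∩ Iio α = (X₂ : Set Ordinal) ∩ Iio α)
    (hA : (A : Set Ordinal) ⊆ X₁) (hB : (B : Set Ordinal) ⊆ X₂) (hAB : M.rank A = M.rank B)
    (hαA : α ∈ (A : Set Ordinal)) (hαB : α ∈ (B : Set Ordinal)) :
    (A : Set Ordinal) ∩ Iio α = (B : Set Ordinal) ∩ Iio α := by
  by_cases hBX : (B : Set Ordinal) = X₂
  · have hAX : (A : Set Ordinal) = X₁ :=
      eq_of_subset_of_rank_eq hA (by rw [hAB, Subtype.ext hBX, hr])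
    rw [hAX, hBX, hseg]
  obtain ⟨hotp, himg⟩ := M.homog X₁ X₂ (rank_eq_rank_iff.1 hr)
  have := M.small_coe X₁
  have := M.small_coe X₂
  obtain ⟨B₀, ⟨hB₀mu, hB₀⟩, hB₀B⟩ :
      (B : Set Ordinal) ∈ (fun Z => omap X₁ X₂ '' Z) '' {Z | Z ∈ M.mu ∧ Z ⊂ X₁} :=
    himg ▸ ⟨B.2, hB.ssubset_of_ne hBX⟩
  have hBB₀ : (B : Set Ordinal) ∩ Iic α = B₀ ∩ Iic α :=
    hB₀B ▸ (strictMonoOn_omap hotp).image_inter_Iic_eq (hA hαA)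
      (fun _ => omap_eq_self_of_le (hB hαB) hseg) hB₀.subset
  have hαB₀ : α ∈ B₀ := (hBB₀ ▸ ⟨hαB, self_mem_Iic⟩ : α ∈ B₀ ∩ Iic α).1
  have hrank : M.rank A = M.rank ⟨B₀, hB₀mu⟩ :=
    hAB.trans (rank_eq_rank_of_eq_omap_image hr hB₀ hB₀B.symm).symm
  calc (A : Set Ordinal) ∩ Iio α = B₀ ∩ Iio α :=
        hcoh A ⟨B₀, hB₀mu⟩ hA hB₀.subset hrank α hαA hαB₀
    _ = (B : Set Ordinal) ∩ Iio α := by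
        simpa only [inter_assoc, inter_eq_right.2 Iio_subset_Iic_self] using
          congrArg (· ∩ Iio α) hBB₀.symm

theorem coherentBelow_of_ssubset {Z : M.mu}
    (h : ∀ X Y : M.mu, (X : Set Ordinal) ⊂ Z → (Y : Set Ordinal) ⊂ Z → M.rank X = M.rank Y →
      ∀ α ∈ (X : Set Ordinal), α ∈ (Y : Set Ordinal) →
        (X : Set Ordinal) ∩ Iio α = (Y : Set Ordinal) ∩ Iio α) :
    M.CoherentBelow Z := by
  intro X Y hX hY hr α hαX hαY
  by_cases hXZ : (X : Set Ordinal) = Z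
  · rw [eq_of_subset_of_rank_eq (hY.trans hXZ.symm.subset) hr.symm]
  by_cases hYZ : (Y : Set Ordinal) = Z
  · rw [eq_of_subset_of_rank_eq (hX.trans hYZ.symm.subset) hr]
  exact h X Y (hX.ssubset_of_ne hXZ) (hY.ssubset_of_ne hYZ) hr α hαX hαY

theorem coherentBelow_of_isStar {Z X₁ X₂ : M.mu} (hr : M.rank X₁ = M.rank X₂)
    (hstar : IsStar X₁ X₂ Z)
    (hside : ∀ V : M.mu, (V : Set Ordinal) ⊂ Z → (V : Set Ordinal) ⊆ X₁ ∨ (V : Set Ordinal) ⊆ X₂)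
    (h₁ : M.CoherentBelow X₁) (h₂ : M.CoherentBelow X₂) : M.CoherentBelow Z := by
  refine coherentBelow_of_ssubset fun X Y hX hY hXY α hαX hαY => ?_
  rcases hside X hX with hX₁ | hX₂ <;> rcases hside Y hY with hY₁ | hY₂
  · exact h₁ X Y hX₁ hY₁ hXY α hαX hαY
  · exact inter_Iio_eq_of_subset_of_subset hr h₁
      (inter_Iio_eq_of_isStar hr hstar (hX₁ hαX) (hY₂ hαY)) hX₁ hY₂ hXY hαX hαY
  · exact (inter_Iio_eq_of_subset_of_subset hr h₁
      (inter_Iio_eq_of_isStar hr hstar (hY₁ hαY) (hX₂ hαX)) hY₁ hX₂ hXY.symm hαY hαX).symm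
  · exact h₂ X Y hX₂ hY₂ hXY α hαX hαY

theorem coherentBelow_of_forall_ssubset {Z : M.mu}
    (IH : ∀ W : M.mu, (W : Set Ordinal) ⊂ Z → M.CoherentBelow W) : M.CoherentBelow Z := by
  rcases M.locAlmostDirected Z with hdir | ⟨X₁, X₂, hr, hstar, hsplit⟩
  · refine coherentBelow_of_ssubset fun X Y hX hY hXY α hαX hαY => ?_
    obtain ⟨W, hW, hWZ, hXW, hYW⟩ := hdir X X.2 Y Y.2 hX hY
    exact IH ⟨W, hW⟩ hWZ X Y hXW hYW hXY α hαX hαY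
  have hmem : ∀ V : M.mu, (V : Set Ordinal) ⊂ Z ↔
      V = X₁ ∨ V = X₂ ∨ (V : Set Ordinal) ⊂ X₁ ∨ (V : Set Ordinal) ⊂ X₂ := by
    intro V
    simpa [V.2, Subtype.ext_iff, or_assoc] using Set.ext_iff.1 hsplit V
  have hside : ∀ V : M.mu, (V : Set Ordinal) ⊂ Z →
      (V : Set Ordinal) ⊆ X₁ ∨ (V : Set Ordinal) ⊆ X₂ := by
    intro V hV
    rcases (hmem V).1 hV with rfl | rfl | h | h
    exacts [Or.inl subset_rfl, Or.inr subset_rfl, Or.inl h.subset, Or.inr h.subset]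
  exact coherentBelow_of_isStar (rank_eq_rank_iff.2 hr) hstar hside
    (IH X₁ ((hmem X₁).2 (by simp))) (IH X₂ ((hmem X₂).2 (by simp)))

theorem coherentBelow (Z : M.mu) : M.CoherentBelow Z := by
  induction Z using M.wf.induction with
  | _ Z IH => exact coherentBelow_of_forall_ssubset IH

end TwoCardinal

theorem coherence_lemma_general (κ : Cardinal) (M : TwoCardinal κ)
    (X Y : M.mu) (hrk : M.rank X = M.rank Y) (α : Ordinal)
    (hX : α ∈ (X : Set Ordinal)) (hY : α ∈ (Y : Set Ordinal)) :
    (X : Set Ordinal) ∩ Set.Iio α = (Y : Set Ordinal) ∩ Set.Iio α := by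
  obtain ⟨Z, hZ, hXZ, hYZ⟩ := M.directed X X.2 Y Y.2
  exact TwoCardinal.coherentBelow ⟨Z, hZ⟩ X Y hXZ hYZ hrk α hX hY

/-- The coherence lemma: elements of a `(κ,κ⁺)`-cardinal of the same rank cohere below any
common element. -/
theorem coherence_lemma (κ : Cardinal) (hκ : κ.IsRegular) (M : TwoCardinal κ)
    (X Y : M.mu) (hrk : M.rank X = M.rank Y) (α : Ordinal)
    (hX : α ∈ (X : Set Ordinal)) (hY : α ∈ (Y : Set Ordinal)) :
    (X : Set Ordinal) ∩ Set.Iio α = (Y : Set Ordinal) ∩ Set.Iio α :=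
  coherence_lemma_general κ M X Y hrk α hX hY
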